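/- arXiv:1409.7023 — 2 statements merged into one kernel-verified Lean document; each statement's English description precedes it below -/
import Mathlib

section
/- Let g(t) = (at+b)/(ct+d) be a Möbius transformation with ad − bc = 1 and c ≠ 0, and let x < y be real numbers such that the pole −d/c satisfies y < −d/c. Then for any t with x < t < y one has (|y+d/c|²/|x+d/c|²) · (|x−t|/|y−t|) < |g(x)−g(t)|/|g(y)−g(t)| < |x−t|/|y−t|. -/
/-!
Since `ad − bc = 1`, `g(x) − g(t) = (x − t) / ((cx + d)(ct + d))`, so the middle quotient is
`|x − t| / |y − t|` times the distortion factor `r = |cy + d| / |cx + d| = |y + d/c| / |x + d/c|`.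
As `x < y` both lie on the same side of the pole, `y` closer to it, whence `0 < r < 1`, and the
two bounds are `r² < r < 1`.
-/

lemma mobius_sub_mobius {a b c d x t : ℝ} (hx : c * x + d ≠ 0) (ht : c * t + d ≠ 0) :
    (a * x + b) / (c * x + d) - (a * t + b) / (c * t + d) =
      (a * d - b * c) * (x - t) / ((c * x + d) * (c * t + d)) := by
  rw [div_sub_div _ _ hx ht]
  ring

lemma mul_add_eq_mul_add_div {c d : ℝ} (hc : c ≠ 0) (x : ℝ) : c * x + d = c * (x + d / c) := by
  field_simp

lemma abs_mobius_sub_div_abs_mobius_sub {a b c d x y t : ℝ} (hdet : a * d - b * c ≠ 0)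
    (hc : c ≠ 0) (hx : x + d / c ≠ 0) (hy : y + d / c ≠ 0) (ht : t + d / c ≠ 0) :
    |(a * x + b) / (c * x + d) - (a * t + b) / (c * t + d)| /
        |(a * y + b) / (c * y + d) - (a * t + b) / (c * t + d)| =
      |x - t| / |y - t| * (|y + d / c| / |x + d / c|) := by
  have hne (s : ℝ) (hs : s + d / c ≠ 0) : c * s + d ≠ 0 := by
    rw [mul_add_eq_mul_add_div hc]; positivity
  rw [mobius_sub_mobius (hne x hx) (hne t ht), mobius_sub_mobius (hne y hy) (hne t ht)]
  simp only [mul_add_eq_mul_add_div hc x, mul_add_eq_mul_add_div hc y,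
    mul_add_eq_mul_add_div hc t, abs_div, abs_mul]
  rcases eq_or_ne y t with rfl | hyt
  · simp
  have hyt' : |y - t| ≠ 0 := abs_ne_zero.mpr (sub_ne_zero.mpr hyt)
  rw [← abs_ne_zero] at hdet hc hx ht
  generalize |x + d / c| = u at *
  generalize |t + d / c| = v at *
  field_simp

/-- Let `g(t) = (a t + b)/(c t + d)` be a Möbius transformation with
`a d − b c = 1` and `c ≠ 0`, and let `x < y` be reals with `y` less than the pole `−d/c`.
Then for any `t` with `x < t < y`,
`(|y+d/c|²/|x+d/c|²)·(|x−t|/|y−t|) < |g(x)−g(t)|/|g(y)−g(t)| < |x−t|/|y−t|`. -/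
theorem mobius_distortion_pole_right (a b c d x y t : ℝ)
    (hdet : a * d - b * c = 1) (hc : c ≠ 0)
    (hpole : y < -d / c) (hxt : x < t) (hty : t < y) :
    (|y + d / c| ^ 2 / |x + d / c| ^ 2) * (|x - t| / |y - t|) <
        |(a * x + b) / (c * x + d) - (a * t + b) / (c * t + d)| /
          |(a * y + b) / (c * y + d) - (a * t + b) / (c * t + d)| ∧
    |(a * x + b) / (c * x + d) - (a * t + b) / (c * t + d)| /
        |(a * y + b) / (c * y + d) - (a * t + b) / (c * t + d)| <
      |x - t| / |y - t| := by
  rw [neg_div] at hpole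
  have hyp : y + d / c < 0 := by linarith
  rw [abs_mobius_sub_div_abs_mobius_sub (by rw [hdet]; exact one_ne_zero) hc (by linarith)
    hyp.ne (by linarith), ← div_pow]
  set r := |y + d / c| / |x + d / c|
  have hr0 : 0 < r := div_pos (abs_pos.mpr hyp.ne) (abs_pos.mpr (by linarith))
  have hr1 : r < 1 := by
    rw [div_lt_one (abs_pos.mpr (by linarith)), abs_of_neg hyp, abs_of_neg (by linarith)]
    linarith
  have hq : 0 < |x - t| / |y - t| :=
    div_pos (abs_pos.mpr (by linarith)) (abs_pos.mpr (by linarith))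
  constructor
  · rw [mul_comm _ r]
    gcongr
    exact pow_lt_self_of_lt_one₀ hr0 hr1 one_lt_two
  · exact mul_lt_of_lt_one_right hq hr1
end

section
/- (Hall's theorem on sums of Cantor sets) Let K and F be Cantor sets in ℝ, each admitting a slow subdivision satisfying the gap condition, and suppose the pair (K, F) satisfies the size condition: the diameter of K exceeds the length of every hole of F, and the diameter of F exceeds the length of every hole of K. Then K + F = [min K + min F, max K + max F]. -/
open Set

/-- A Cantor set in `ℝ`: a nonempty, compact, perfect, totally disconnected subset. -/
def IsCantorSet (K : Set ℝ) : Prop :=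
  K.Nonempty ∧ IsCompact K ∧ Perfect K ∧ IsTotallyDisconnected K

/-- A hole of a Cantor set `K`: a bounded connected component `(u,v)` of the complement
of `K` inside `[min K, max K]`; its endpoints lie in `K`. -/
def IsHole (K : Set ℝ) (u v : ℝ) : Prop :=
  u < v ∧ u ∈ K ∧ v ∈ K ∧ Set.Ioo u v ∩ K = ∅

/-- A slow subdivision of a Cantor set `K`: a decreasing family `level n` of closed
sets, each a finite disjoint union of closed intervals, starting from
`[min K, max K]`, where at step `n` one connected component `[A n, D n]` of `level n`
is split by removing the open hole `(B n, C n)` (leaving the two nonempty closed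
intervals `K^L = [A n, B n]` and `K^R = [C n, D n]`), and with `⋂ n, level n = K`. -/
structure SlowSubdivision (K : Set ℝ) where
  A : ℕ → ℝ
  B : ℕ → ℝ
  C : ℕ → ℝ
  D : ℕ → ℝ
  hAB : ∀ n, A n ≤ B n
  hBC : ∀ n, B n < C n
  hCD : ∀ n, C n ≤ D n
  level : ℕ → Set ℝ
  level_zero : level 0 = Set.Icc (sInf K) (sSup K)
  /-- `[A n, D n]` is a connected component of `level n`. -/
  comp : ∀ n, Set.Icc (A n) (D n) = connectedComponentIn (level n) (A n)
  level_succ : ∀ n, level (n + 1) = level n \ Set.Ioo (B n) (C n)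
  inter_eq : ⋂ n, level n = K

/-- The gap condition: each removed hole is strictly shorter than both adjacent
remaining closed intervals. -/
def SlowSubdivision.GapCondition {K : Set ℝ} (s : SlowSubdivision K) : Prop :=
  ∀ n, s.C n - s.B n < s.B n - s.A n ∧ s.C n - s.B n < s.D n - s.C n

/-- A slow subdivision is monotone if the removed holes are ordered by
non-increasing length. -/
def SlowSubdivision.IsMonotone {K : Set ℝ} (s : SlowSubdivision K) : Prop :=
  ∀ n, s.C (n + 1) - s.B (n + 1) ≤ s.C n - s.B n

open Pointwise

/-! Newhouse's gap lemma. By compactness it suffices that, for `t` in the interval, every level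
`K(n)` meets the reflected level `t - F(n)`. The gap condition makes each gap of a level shorter
than its distance to the ends of the level and to every gap at least as long. Given a linked pair
of gaps, one of each level, either the far end of the shorter gap lies in both sets, or it lies
in a gap of the other level that is strictly shorter than the longer gap and again linked with
the shorter one. The total length of the pair decreases, so with finitely many gaps the descent
ends at a common point; the size condition provides the first linked pair. -/

theorem mem_iInter_add_iInter {G : Type*} [AddGroup G] [TopologicalSpace G]
    [IsTopologicalAddGroup G] [T2Space G] {s t : ℕ → Set G} (hs : Antitone s) (ht : Antitone t)
    (hsc : ∀ n, IsCompact (s n)) (htc : ∀ n, IsCompact (t n)) {a : G}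
    (ha : ∀ n, a ∈ s n + t n) : a ∈ (⋂ n, s n) + ⋂ n, t n := by
  set V : ℕ → Set G := fun n => s n ∩ (fun x => -x + a) ⁻¹' t n
  have hV_closed n : IsClosed (V n) :=
    (hsc n).isClosed.inter ((htc n).isClosed.preimage (by fun_prop))
  have hV_nonempty n : (V n).Nonempty := by
    obtain ⟨x, hx, y, hy, rfl⟩ := ha n
    exact ⟨x, hx, by simpa using hy⟩
  have hV_anti : Antitone V := fun _ _ hmn =>
    inter_subset_inter (hs hmn) (preimage_mono (ht hmn))
  obtain ⟨x, hx⟩ := IsCompact.nonempty_iInter_of_directed_nonempty_isCompact_isClosed V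
    hV_anti.directed_ge hV_nonempty
    (fun n => (hsc n).of_isClosed_subset (hV_closed n) inter_subset_left) hV_closed
  rw [mem_iInter] at hx
  exact ⟨x, mem_iInter.2 fun n => (hx n).1, -x + a, mem_iInter.2 fun n => (hx n).2,
    add_neg_cancel_left x a⟩

/-- A finite model of a level of a thick Cantor set: within `[lo, hi]`, `S` is the complement of
the open gaps `(b i, c i)`, and every gap is shorter than its distance to the ends of `[lo, hi]`
and to any gap at least as long. -/
structure GapSystem where
  S : Set ℝ
  lo : ℝ
  hi : ℝ
  N : ℕ
  b : Fin N → ℝ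
  c : Fin N → ℝ
  lo_mem : lo ∈ S
  hi_mem : hi ∈ S
  b_mem : ∀ i, b i ∈ S
  c_mem : ∀ i, c i ∈ S
  b_lt_c : ∀ i, b i < c i
  disjoint_gap : ∀ i, Disjoint (Ioo (b i) (c i)) S
  exists_mem_gap : ∀ x ∈ Icc lo hi, x ∉ S → ∃ i, x ∈ Ioo (b i) (c i)
  len_lt_sub_lo : ∀ i, c i - b i < b i - lo
  len_lt_hi_sub : ∀ i, c i - b i < hi - c i
  len_lt_left : ∀ i j, c i - b i ≤ c j - b j → c j ≤ b i → c i - b i < b i - c j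
  len_lt_right : ∀ i j, c i - b i ≤ c j - b j → c i ≤ b j → c i - b i < b j - c i

namespace GapSystem

variable {P Q : GapSystem}

def len (P : GapSystem) (i : Fin P.N) : ℝ := P.c i - P.b i

def Linked (P Q : GapSystem) (i : Fin P.N) (j : Fin Q.N) : Prop :=
  P.b i < Q.b j ∧ Q.b j < P.c i ∧ P.c i < Q.c j

theorem Linked.nonempty_inter_or_exists_linked {i : Fin P.N} {j : Fin Q.N} (h : Linked P Q i j)
    (hlen : Q.len j ≤ P.len i) :
    (P.S ∩ Q.S).Nonempty ∨ ∃ i', P.len i' < P.len i ∧ Linked Q P j i' := by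
  obtain ⟨hbb, hbc, hcc⟩ := h
  by_cases hc : Q.c j ∈ P.S
  · exact .inl ⟨_, hc, Q.c_mem j⟩
  unfold len at hlen ⊢
  have := P.b_lt_c i
  have := P.len_lt_sub_lo i
  have := P.len_lt_hi_sub i
  obtain ⟨i', hi'⟩ := P.exists_mem_gap _ ⟨by linarith, by linarith⟩ hc
  have hcb : P.c i ≤ P.b i' := by
    by_contra! hlt
    exact disjoint_left.1 (P.disjoint_gap i') ⟨hlt, hcc.trans hi'.2⟩ (P.c_mem i)
  have hlen' : P.c i' - P.b i' < P.c i - P.b i := by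
    by_contra! hge
    linarith [P.len_lt_right i i' hge hcb, hi'.1]
  exact .inr ⟨i', hlen', hbc.trans_le hcb, hi'.1, hi'.2⟩

def reflect (P : GapSystem) (t : ℝ) : GapSystem where
  S := (t - ·) '' P.S
  lo := t - P.hi
  hi := t - P.lo
  N := P.N
  b i := t - P.c i
  c i := t - P.b i
  lo_mem := mem_image_of_mem _ P.hi_mem
  hi_mem := mem_image_of_mem _ P.lo_mem
  b_mem i := mem_image_of_mem _ (P.c_mem i)
  c_mem i := mem_image_of_mem _ (P.b_mem i)
  b_lt_c i := by linarith [P.b_lt_c i]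
  disjoint_gap i := by
    refine disjoint_left.2 ?_
    rintro _ hx ⟨y, hy, rfl⟩
    exact disjoint_left.1 (P.disjoint_gap i) ⟨by linarith [hx.2], by linarith [hx.1]⟩ hy
  exists_mem_gap x hx hxS := by
    obtain ⟨i, hi⟩ := P.exists_mem_gap (t - x) ⟨by linarith [hx.2], by linarith [hx.1]⟩
      fun h => hxS ⟨t - x, h, sub_sub_cancel t x⟩
    exact ⟨i, by linarith [hi.2], by linarith [hi.1]⟩
  len_lt_sub_lo i := by linarith [P.len_lt_hi_sub i]
  len_lt_hi_sub i := by linarith [P.len_lt_sub_lo i]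
  len_lt_left i j hlen hcb := by linarith [P.len_lt_right i j (by linarith) (by linarith)]
  len_lt_right i j hlen hcb := by linarith [P.len_lt_left i j (by linarith) (by linarith)]

theorem linked_reflect (t : ℝ) {i : Fin P.N} {j : Fin Q.N} :
    Linked (Q.reflect t) (P.reflect t) j i ↔ Linked P Q i j := by
  simp only [Linked, reflect, sub_lt_sub_iff_left]
  tauto

theorem nonempty_inter_of_reflect {t : ℝ} (h : ((P.reflect t).S ∩ (Q.reflect t).S).Nonempty) :
    (P.S ∩ Q.S).Nonempty := by
  simp only [reflect] at h
  rw [← image_inter sub_right_injective] at h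
  exact h.of_image

noncomputable def numPairsLT (P Q : GapSystem) (s : ℝ) : ℕ :=
  (Finset.univ.filter fun p : Fin P.N × Fin Q.N => P.len p.1 + Q.len p.2 < s).card

theorem numPairsLT_comm (s : ℝ) : numPairsLT P Q s = numPairsLT Q P s :=
  Finset.card_equiv (Equiv.prodComm _ _) fun p => by simp [add_comm]

theorem numPairsLT_lt {s : ℝ} {i : Fin P.N} {j : Fin Q.N} (hs : P.len i + Q.len j < s) :
    numPairsLT P Q (P.len i + Q.len j) < numPairsLT P Q s := by
  refine Finset.card_lt_card ((Finset.ssubset_iff_of_subset ?_).2 ⟨(i, j), ?_, ?_⟩)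
  · exact Finset.monotone_filter_right _ fun p _ hp => hp.trans hs
  · simpa using hs
  · simp

theorem Linked.nonempty_inter {i : Fin P.N} {j : Fin Q.N} (h : Linked P Q i j) :
    (P.S ∩ Q.S).Nonempty := by
  induction hk : numPairsLT P Q (P.len i + Q.len j) using Nat.strong_induction_on
    generalizing P Q i j with
  | _ k ih =>
  subst hk
  rcases le_or_gt (Q.len j) (P.len i) with hle | hlt
  · obtain hne | ⟨i', hi', h'⟩ := h.nonempty_inter_or_exists_linked hle
    · exact hne
    refine inter_comm Q.S P.S ▸ ih _ ?_ h' rfl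
    rw [numPairsLT_comm, add_comm]
    exact numPairsLT_lt (by linarith)
  · -- the first case, for the reflections of `Q` and `P`
    obtain hne | ⟨j', hj', h'⟩ :=
      ((linked_reflect 0).2 h).nonempty_inter_or_exists_linked (by
        simp only [len, reflect] at hlt ⊢
        linarith)
    · exact inter_comm Q.S P.S ▸ nonempty_inter_of_reflect hne
    refine inter_comm Q.S P.S ▸ ih _ ?_ ((linked_reflect 0).1 h') rfl
    rw [numPairsLT_comm, add_comm]
    refine numPairsLT_lt ?_
    simp only [len, reflect] at hj' ⊢
    linarith

theorem nonempty_inter_of_len_lt (hlenQ : ∀ j, Q.len j < P.hi - P.lo)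
    (hlenP : ∀ i, P.len i < Q.hi - Q.lo) (hPQ : P.lo ≤ Q.hi) (hQP : Q.lo ≤ P.hi) :
    (P.S ∩ Q.S).Nonempty := by
  wlog hlo : Q.lo ≤ P.lo generalizing P Q
  · exact inter_comm Q.S P.S ▸ this hlenP hlenQ hQP hPQ (le_of_not_ge hlo)
  by_cases hPlo : P.lo ∈ Q.S
  · exact ⟨P.lo, P.lo_mem, hPlo⟩
  obtain ⟨j, hj⟩ := Q.exists_mem_gap P.lo ⟨hlo, hPQ⟩ hPlo
  by_cases hQc : Q.c j ∈ P.S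
  · exact ⟨Q.c j, hQc, Q.c_mem j⟩
  have := hlenQ j
  unfold len at this
  obtain ⟨i, hi⟩ := P.exists_mem_gap (Q.c j) ⟨hj.2.le, by linarith [hj.1]⟩ hQc
  have hlo_b : P.lo < P.b i := by linarith [P.len_lt_sub_lo i, P.b_lt_c i]
  exact inter_comm Q.S P.S ▸ Linked.nonempty_inter ⟨hj.1.trans hlo_b, hi.1, hi.2⟩

end GapSystem

namespace SlowSubdivision

variable {K : Set ℝ} (s : SlowSubdivision K)

theorem A_le_D (n : ℕ) : s.A n ≤ s.D n :=
  (s.hAB n).trans ((s.hBC n).le.trans (s.hCD n))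

theorem Icc_subset_level (n : ℕ) : Icc (s.A n) (s.D n) ⊆ s.level n :=
  s.comp n ▸ connectedComponentIn_subset _ _

theorem antitone_level : Antitone s.level :=
  antitone_nat_of_succ_le fun n => s.level_succ n ▸ sdiff_subset

theorem subset_level (n : ℕ) : K ⊆ s.level n :=
  s.inter_eq.symm.subset.trans (iInter_subset _ n)

theorem level_subset_Icc (n : ℕ) : s.level n ⊆ Icc (sInf K) (sSup K) :=
  s.level_zero ▸ s.antitone_level (Nat.zero_le n)

theorem isCompact_level (n : ℕ) : IsCompact (s.level n) := by
  refine isCompact_Icc.of_isClosed_subset ?_ (s.level_subset_Icc n)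
  induction n with
  | zero => rw [s.level_zero]; exact isClosed_Icc
  | succ n ih => rw [s.level_succ]; exact ih.sdiff isOpen_Ioo

theorem disjoint_level_of_lt {j m : ℕ} (h : j < m) :
    Disjoint (Ioo (s.B j) (s.C j)) (s.level m) := by
  refine Disjoint.mono_right (s.antitone_level h) ?_
  rw [s.level_succ]
  exact disjoint_sdiff_right

theorem C_le_A_or_D_le_B {j m : ℕ} (h : j < m) : s.C j ≤ s.A m ∨ s.D m ≤ s.B j := by
  have hdisj := (s.disjoint_level_of_lt h).mono_right
    (Ioo_subset_Icc_self.trans (s.Icc_subset_level m))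
  rw [Ioo_disjoint_Ioo, min_le_iff, le_max_iff, le_max_iff] at hdisj
  have := s.hBC j
  have := (s.hAB m).trans_lt ((s.hBC m).trans_le (s.hCD m))
  rcases hdisj with (hCB | hCA) | (hDB | hDA)
  · linarith
  · exact .inl hCA
  · exact .inr hDB
  · linarith

theorem mem_of_forall_notMem_Ioo {x : ℝ} (h0 : x ∈ s.level 0)
    (h : ∀ m, x ∉ Ioo (s.B m) (s.C m)) : x ∈ K := by
  refine s.inter_eq.subset (mem_iInter.2 fun m => ?_)
  induction m with
  | zero => exact h0
  | succ m ih => exact s.level_succ m ▸ ⟨ih, h m⟩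

theorem B_C_notMem_Ioo (i m : ℕ) :
    s.B i ∉ Ioo (s.B m) (s.C m) ∧ s.C i ∉ Ioo (s.B m) (s.C m) := by
  have := s.hAB i
  have := s.hBC i
  have := s.hCD i
  have := s.hAB m
  have := s.hBC m
  have := s.hCD m
  simp only [mem_Ioo, not_and_or, not_lt]
  rcases lt_trichotomy m i with h | rfl | h
  · rcases s.C_le_A_or_D_le_B h with h' | h'
    · exact ⟨.inr (by linarith), .inr (by linarith)⟩
    · exact ⟨.inl (by linarith), .inl (by linarith)⟩
  · exact ⟨.inl le_rfl, .inr le_rfl⟩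
  · rcases s.C_le_A_or_D_le_B h with h' | h'
    · exact ⟨.inl (by linarith), .inl (by linarith)⟩
    · exact ⟨.inr (by linarith), .inr (by linarith)⟩

theorem B_mem (i : ℕ) : s.B i ∈ K :=
  s.mem_of_forall_notMem_Ioo (s.antitone_level (Nat.zero_le i)
    (s.Icc_subset_level i ⟨s.hAB i, (s.hBC i).le.trans (s.hCD i)⟩))
    fun m => (s.B_C_notMem_Ioo i m).1

theorem C_mem (i : ℕ) : s.C i ∈ K :=
  s.mem_of_forall_notMem_Ioo (s.antitone_level (Nat.zero_le i)
    (s.Icc_subset_level i ⟨(s.hAB i).trans (s.hBC i).le, s.hCD i⟩))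
    fun m => (s.B_C_notMem_Ioo i m).2

theorem isHole (i : ℕ) : IsHole K (s.B i) (s.C i) :=
  ⟨s.hBC i, s.B_mem i, s.C_mem i,
    ((s.disjoint_level_of_lt i.lt_succ_self).mono_right (s.subset_level _)).inter_eq⟩

theorem exists_mem_Ioo_of_notMem_level {n : ℕ} {x : ℝ} (hx : x ∈ Icc (sInf K) (sSup K))
    (hxn : x ∉ s.level n) : ∃ i : Fin n, x ∈ Ioo (s.B i) (s.C i) := by
  induction n with
  | zero => exact absurd (s.level_zero ▸ hx) hxn
  | succ n ih =>
    by_cases hx' : x ∈ s.level n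
    · exact ⟨Fin.last n, by_contra fun h => hxn (s.level_succ n ▸ ⟨hx', h⟩)⟩
    · obtain ⟨i, hi⟩ := ih hx'
      exact ⟨i.castSucc, hi⟩

theorem len_lt_left (hgap : s.GapCondition) {i j : ℕ} (hlen : s.C i - s.B i ≤ s.C j - s.B j)
    (hle : s.C j ≤ s.B i) :
    s.C i - s.B i < s.B i - s.C j := by
  have := hgap i
  have := hgap j
  have := s.hBC i
  have := s.hBC j
  rcases lt_trichotomy j i with h | rfl | h
  · rcases s.C_le_A_or_D_le_B h with h' | h' <;> linarith [s.hCD i]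
  · linarith
  · rcases s.C_le_A_or_D_le_B h with h' | h' <;> linarith [s.hAB j]

theorem len_lt_right (hgap : s.GapCondition) {i j : ℕ} (hlen : s.C i - s.B i ≤ s.C j - s.B j)
    (hle : s.C i ≤ s.B j) :
    s.C i - s.B i < s.B j - s.C i := by
  have := hgap i
  have := hgap j
  have := s.hBC i
  have := s.hBC j
  rcases lt_trichotomy j i with h | rfl | h
  · rcases s.C_le_A_or_D_le_B h with h' | h' <;> linarith [s.hAB i]
  · linarith
  · rcases s.C_le_A_or_D_le_B h with h' | h' <;> linarith [s.hCD j]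

noncomputable def gapSystem (hK : IsCompact K) (hne : K.Nonempty) (hgap : s.GapCondition)
    (n : ℕ) : GapSystem where
  S := s.level n
  lo := sInf K
  hi := sSup K
  N := n
  b i := s.B i
  c i := s.C i
  lo_mem := s.subset_level n (hK.sInf_mem hne)
  hi_mem := s.subset_level n (hK.sSup_mem hne)
  b_mem i := s.subset_level n (s.B_mem i)
  c_mem i := s.subset_level n (s.C_mem i)
  b_lt_c i := s.hBC i
  disjoint_gap i := s.disjoint_level_of_lt i.2
  exists_mem_gap _ := s.exists_mem_Ioo_of_notMem_level
  len_lt_sub_lo i := by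
    linarith [(hgap i).1, (s.level_subset_Icc i (s.Icc_subset_level i ⟨le_rfl, s.A_le_D i⟩)).1]
  len_lt_hi_sub i := by
    linarith [(hgap i).2, (s.level_subset_Icc i (s.Icc_subset_level i ⟨s.A_le_D i, le_rfl⟩)).2]
  len_lt_left i j := s.len_lt_left hgap
  len_lt_right i j := s.len_lt_right hgap

end SlowSubdivision

/-- **Hall's theorem on sums of Cantor sets.** Let `K` and `F` be Cantor
sets in `ℝ`, each admitting a slow subdivision satisfying the gap condition, and
suppose the pair `(K, F)` satisfies the size condition: the diameter of `K` exceeds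
the length of every hole of `F` and vice versa. Then
`K + F = [min K + min F, max K + max F]`. -/
theorem hall_sum_of_cantor_sets (K F : Set ℝ)
    (hK : IsCantorSet K) (hF : IsCantorSet F)
    (sK : SlowSubdivision K) (hsK : sK.GapCondition)
    (sF : SlowSubdivision F) (hsF : sF.GapCondition)
    (hsize1 : ∀ u v : ℝ, IsHole F u v → v - u < sSup K - sInf K)
    (hsize2 : ∀ u v : ℝ, IsHole K u v → v - u < sSup F - sInf F) :
    K + F = Set.Icc (sInf K + sInf F) (sSup K + sSup F) := by
  obtain ⟨hKne, hKc, -, -⟩ := hK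
  obtain ⟨hFne, hFc, -, -⟩ := hF
  refine ((add_subset_add (sK.subset_level 0) (sF.subset_level 0)).trans ?_).antisymm
    fun t ht => ?_
  · rw [sK.level_zero, sF.level_zero]
    exact Icc_add_Icc_subset _ _ _ _
  rw [← sK.inter_eq, ← sF.inter_eq]
  refine mem_iInter_add_iInter sK.antitone_level sF.antitone_level sK.isCompact_level
    sF.isCompact_level fun n => ?_
  obtain ⟨x, hxK, y, hyF, rfl⟩ := GapSystem.nonempty_inter_of_len_lt
    (P := sK.gapSystem hKc hKne hsK n) (Q := (sF.gapSystem hFc hFne hsF n).reflect t)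
    (fun j => by simpa [GapSystem.len, GapSystem.reflect, SlowSubdivision.gapSystem]
      using hsize1 _ _ (sF.isHole j))
    (fun i => by simpa [GapSystem.len, GapSystem.reflect, SlowSubdivision.gapSystem]
      using hsize2 _ _ (sK.isHole i))
    (show sInf K ≤ t - sInf F by linarith [ht.1])
    (show t - sSup F ≤ sSup K by linarith [ht.2])
  exact ⟨t - y, hxK, y, hyF, sub_add_cancel t y⟩
end
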